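/- (Proposition 3.1, invariant part, single layer.) Let V = Fin n be a node set, H, E, H' types, M an additive commutative monoid, h : V → H node features, e : V → V → E edge features, N : V → Finset V neighborhoods, and φ_m : H → H → ℝ → E → M, φ_h : H → M → H' arbitrary functions. For coordinates y : V → (Fin 3 → ℝ) define the invariant layer output f(y) : V → H' by f(y) i = φ_h (h i) (∑ j ∈ N i, φ_m (h i) (h j) (‖y i − y j‖²) (e i j)). Let μ, μ_g, t ∈ ℝ³, Q ∈ O(3) orthogonal with μ_g = Q.mulVec μ + t, and L, L_g invertible 3×3 real matrices with L_g * L_gᵀ = Q * L * Lᵀ * Qᵀ; set F(v) = L⁻¹.mulVec (v − μ) and F_g(v) = L_g⁻¹.mulVec (v − μ_g). Then for any coordinates x : V → (Fin 3 → ℝ), f(fun i => F (x i)) = f(fun i => F_g (Q.mulVec (x i) + t)); i.e., the invariant output of a scalarization-based E(3)-equivariant GNN layer computed in the standard space is invariant under rigid motions of the input followed by the corresponding re-derived affine transformation. -/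

import Mathlib

/-!
Both layers see the same squared pairwise distances. After the rigid motion and the re-derived
transformation a point becomes `Lg⁻¹ Q (x i - μ)`, while the original transformation gives
`L⁻¹ (x i - μ)`. The two matrices `Lg⁻¹ Q` and `L⁻¹` have the same Gram matrix `(L Lᵀ)⁻¹`,
because `(Lg⁻¹)ᵀ Lg⁻¹ = (Lg Lgᵀ)⁻¹ = (Q L Lᵀ Qᵀ)⁻¹` and `Q⁻¹ = Qᵀ`. So they preserve the
same squared norms.
-/

open Matrix

/-- View a vector `Fin 3 → ℝ` as a point of Euclidean space (ℓ² norm). -/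
noncomputable def toE (v : Fin 3 → ℝ) : EuclideanSpace ℝ (Fin 3) :=
  (WithLp.equiv 2 (Fin 3 → ℝ)).symm v

lemma toE_sub (v w : Fin 3 → ℝ) : toE v - toE w = toE (v - w) := rfl

lemma norm_toE_sq (v : Fin 3 → ℝ) : ‖toE v‖ ^ 2 = v ⬝ᵥ v := by
  rw [← real_inner_self_eq_norm_sq]
  exact EuclideanSpace.inner_toLp_toLp v v

namespace Matrix

variable {m n R : Type*} [Fintype m] [Fintype n]

lemma mulVec_dotProduct_mulVec_self [CommSemiring R] (A : Matrix m n R) (v : n → R) :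
    A *ᵥ v ⬝ᵥ A *ᵥ v = v ⬝ᵥ (Aᵀ * A) *ᵥ v := by
  rw [dotProduct_mulVec, dotProduct_mulVec, ← vecMul_vecMul, vecMul_transpose]

variable [DecidableEq n] [CommRing R]

lemma transpose_nonsing_inv_mul_nonsing_inv (L : Matrix n n R) : L⁻¹ᵀ * L⁻¹ = (L * Lᵀ)⁻¹ := by
  rw [mul_inv_rev, transpose_nonsing_inv]

lemma nonsing_inv_conj_orthogonal {Q : Matrix n n R} (hQ : Q ∈ orthogonalGroup n R)
    (X : Matrix n n R) : (Q * X * Qᵀ)⁻¹ = Q * X⁻¹ * Qᵀ := by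
  rw [mul_inv_rev, mul_inv_rev, inv_eq_right_inv ((mem_orthogonalGroup_iff n R).mp hQ),
    inv_eq_right_inv ((mem_orthogonalGroup_iff' n R).mp hQ), Matrix.mul_assoc]

lemma transpose_mul_self_nonsing_inv_mul_eq {Q L Lg : Matrix n n R}
    (hQ : Q ∈ orthogonalGroup n R) (hcov : Lg * Lgᵀ = Q * L * Lᵀ * Qᵀ) :
    (Lg⁻¹ * Q)ᵀ * (Lg⁻¹ * Q) = L⁻¹ᵀ * L⁻¹ := by
  have hQQ : Qᵀ * Q = 1 := (mem_orthogonalGroup_iff' n R).mp hQ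
  rw [transpose_mul, Matrix.mul_assoc, ← Matrix.mul_assoc Lg⁻¹ᵀ,
    transpose_nonsing_inv_mul_nonsing_inv, hcov, Matrix.mul_assoc Q,
    nonsing_inv_conj_orthogonal hQ, transpose_nonsing_inv_mul_nonsing_inv]
  simp only [← Matrix.mul_assoc, hQQ, Matrix.one_mul]
  rw [Matrix.mul_assoc, hQQ, Matrix.mul_one]

end Matrix

lemma norm_toE_mulVec_eq_of_transpose_mul_self_eq {A B : Matrix (Fin 3) (Fin 3) ℝ}
    (hAB : Aᵀ * A = Bᵀ * B) (v : Fin 3 → ℝ) : ‖toE (A *ᵥ v)‖ = ‖toE (B *ᵥ v)‖ := by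
  rw [← sq_eq_sq₀ (norm_nonneg _) (norm_nonneg _), norm_toE_sq, norm_toE_sq,
    mulVec_dotProduct_mulVec_self, mulVec_dotProduct_mulVec_self, hAB]

theorem gnn_invariant_output_invariant_general
    (n : ℕ) (H E H' M : Type*) [AddCommMonoid M]
    (h : Fin n → H) (e : Fin n → Fin n → E) (N : Fin n → Finset (Fin n))
    (φm : H → H → ℝ → E → M) (φh : H → M → H')
    (μ μg t : Fin 3 → ℝ) (Q L Lg : Matrix (Fin 3) (Fin 3) ℝ)
    (hQ : Q ∈ Matrix.orthogonalGroup (Fin 3) ℝ)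
    (hμ : μg = Q.mulVec μ + t)
    (hcov : Lg * Lgᵀ = Q * L * Lᵀ * Qᵀ)
    (f : (Fin n → (Fin 3 → ℝ)) → Fin n → H')
    (hf : ∀ (y : Fin n → (Fin 3 → ℝ)) (i : Fin n),
      f y i = φh (h i) (∑ j ∈ N i, φm (h i) (h j) (‖toE (y i) - toE (y j)‖ ^ 2) (e i j)))
    (x : Fin n → (Fin 3 → ℝ)) :
    f (fun i => L⁻¹.mulVec (x i - μ))
      = f (fun i => Lg⁻¹.mulVec (Q.mulVec (x i) + t - μg)) := by
  have hmoved : ∀ i, Lg⁻¹ *ᵥ (Q *ᵥ x i + t - μg) = (Lg⁻¹ * Q) *ᵥ (x i - μ) := fun i => by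
    rw [hμ, add_sub_add_right_eq_sub, ← mulVec_sub, mulVec_mulVec]
  have hdist : ∀ i j, ‖toE (L⁻¹ *ᵥ (x i - μ)) - toE (L⁻¹ *ᵥ (x j - μ))‖
      = ‖toE (Lg⁻¹ *ᵥ (Q *ᵥ x i + t - μg)) - toE (Lg⁻¹ *ᵥ (Q *ᵥ x j + t - μg))‖ := fun i j => by
    rw [hmoved, hmoved, toE_sub, toE_sub, ← mulVec_sub, ← mulVec_sub]
    exact norm_toE_mulVec_eq_of_transpose_mul_self_eq
      (transpose_mul_self_nonsing_inv_mul_eq hQ hcov).symm _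
  funext i
  simp only [hf, hdist]

/-- Proposition 3.1, invariant part (single layer): the invariant output of a
scalarization-based E(3)-equivariant GNN layer, computed on coordinates mapped to
the standard space, is invariant under rigid motions of the input together with
the correspondingly re-derived affine transformation. -/
theorem gnn_invariant_output_invariant
    (n : ℕ) (H E H' M : Type*) [AddCommMonoid M]
    (h : Fin n → H) (e : Fin n → Fin n → E) (N : Fin n → Finset (Fin n))
    (φm : H → H → ℝ → E → M) (φh : H → M → H')
    (μ μg t : Fin 3 → ℝ) (Q L Lg : Matrix (Fin 3) (Fin 3) ℝ)
    (hQ : Q ∈ Matrix.orthogonalGroup (Fin 3) ℝ)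
    (hμ : μg = Q.mulVec μ + t)
    (hL : IsUnit L.det) (hLg : IsUnit Lg.det)
    (hcov : Lg * Lgᵀ = Q * L * Lᵀ * Qᵀ)
    (f : (Fin n → (Fin 3 → ℝ)) → Fin n → H')
    (hf : ∀ (y : Fin n → (Fin 3 → ℝ)) (i : Fin n),
      f y i = φh (h i) (∑ j ∈ N i, φm (h i) (h j) (‖toE (y i) - toE (y j)‖ ^ 2) (e i j)))
    (x : Fin n → (Fin 3 → ℝ)) :
    f (fun i => L⁻¹.mulVec (x i - μ))
      = f (fun i => Lg⁻¹.mulVec (Q.mulVec (x i) + t - μg)) :=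
  gnn_invariant_output_invariant_general n H E H' M h e N φm φh μ μg t Q L Lg hQ hμ hcov f hf x
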